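/- arXiv:1711.07391 — 7 statements merged into one kernel-verified Lean document; each statement's English description precedes it below -/
import Mathlib

section
/- Let R be a commutative ring and t ∈ R. Let P be a type with a degree map deg : P → ℕ such that deg x ≥ 1 for all x and {x : P | deg x = d} is finite for every d. Then: (i) for every s ≥ 0 the set Ξ_s of finitely supported functions m : P → ℕ with Σ_x m(x)·deg(x) = s is finite; and (ii) setting ξ_s := Σ_{m ∈ Ξ_s} Π_{x ∈ supp(m)} (1 − t^{deg x}) (so ξ_0 = 1), for every N ≥ 0 one has the congruence of formal power series in R⟦z⟧: (Σ_{s=0}^{N} ξ_s z^s) · Π_{x : deg x ≤ N} (1 − z^{deg x}) ≡ Π_{x : deg x ≤ N} (1 − t^{deg x} z^{deg x}) (mod z^{N+1}), where the products run over the finite set {x : deg x ≤ N}. -/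
/-!
A point `x` of degree `d` contributes the Euler factor
`(1 - t^d z^d) / (1 - z^d) = 1 + (1 - t^d) (z^d + z^{2d} + ⋯)`. Expanding the product of these
factors over `{x | deg x ≤ N}`, choosing the term `z^{m x * deg x}` at `x`, the coefficient of
`z^s` for `s ≤ N` is the sum over all `m` of weight `s` of `∏_{m x ≠ 0} (1 - t^{deg x})`, that is
`ξ_s`. Multiplying by `∏ (1 - z^{deg x})` clears the denominators, and truncating a factor at
`z^{N+1}` does not change coefficients of degree `≤ N`.
-/

namespace Finsupp

variable {P : Type*}

noncomputable def mulPointwise (m : P →₀ ℕ) (d : P → ℕ) : P →₀ ℕ :=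
  onFinset m.support (fun x => m x * d x) fun _ hx => mem_support_iff.2 (left_ne_zero_of_mul hx)

noncomputable def divPointwise (l : P →₀ ℕ) (d : P → ℕ) : P →₀ ℕ :=
  onFinset l.support (fun x => l x / d x) fun _ hx =>
    mem_support_iff.2 fun h => hx (by rw [h, Nat.zero_div])

@[simp] lemma mulPointwise_apply (m : P →₀ ℕ) (d : P → ℕ) (x : P) :
    m.mulPointwise d x = m x * d x := rfl

@[simp] lemma divPointwise_apply (l : P →₀ ℕ) (d : P → ℕ) (x : P) :
    l.divPointwise d x = l x / d x := rfl

lemma divPointwise_mulPointwise {d : P → ℕ} (hd : ∀ x, d x ≠ 0) (m : P →₀ ℕ) :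
    (m.mulPointwise d).divPointwise d = m := by
  ext x
  simp [Nat.mul_div_cancel _ (Nat.pos_of_ne_zero (hd x))]

lemma mulPointwise_injective {d : P → ℕ} (hd : ∀ x, d x ≠ 0) :
    Function.Injective fun m : P →₀ ℕ => m.mulPointwise d :=
  fun m₁ m₂ h => by
    rw [← divPointwise_mulPointwise hd m₁, ← divPointwise_mulPointwise hd m₂]
    exact congrArg (divPointwise · d) h

lemma mulPointwise_divPointwise {d : P → ℕ} {l : P →₀ ℕ} (hl : ∀ x, d x ∣ l x) :
    (l.divPointwise d).mulPointwise d = l := by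
  ext x
  exact Nat.div_mul_cancel (hl x)

lemma weight_eq_sum_of_support_subset (d : P → ℕ) {m : P →₀ ℕ} {S : Finset P}
    (hS : m.support ⊆ S) : weight d m = ∑ x ∈ S, m x * d x :=
  sum_of_support_subset m hS _ fun _ _ => zero_mul _

lemma support_subset_of_weight_eq {d : P → ℕ} {m : P →₀ ℕ} {k : ℕ} {S : Finset P}
    (hS : ∀ x, d x ≤ k → x ∈ S) (hm : weight d m = k) : m.support ⊆ S :=
  fun x hx => hS x (hm ▸ le_weight_of_ne_zero' d (mem_support_iff.1 hx))

lemma mulPointwise_mem_finsuppAntidiag [DecidableEq P] (d : P → ℕ) {m : P →₀ ℕ} {S : Finset P}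
    (hS : m.support ⊆ S) : m.mulPointwise d ∈ Finset.finsuppAntidiag S (weight d m) := by
  rw [Finset.mem_finsuppAntidiag, weight_eq_sum_of_support_subset d hS]
  exact ⟨rfl, support_onFinset_subset.trans hS⟩

theorem finite_setOf_weight_eq {d : P → ℕ} (hd : ∀ x, d x ≠ 0)
    (hfib : ∀ k, {x | d x = k}.Finite) (k : ℕ) : {m : P →₀ ℕ | weight d m = k}.Finite := by
  classical
  obtain ⟨S, hS⟩ : ∃ S : Finset P, ∀ x, d x ≤ k → x ∈ S :=
    have hfin := (Set.finite_Iic k).preimage' fun j _ => hfib j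
    ⟨hfin.toFinset, fun x hx => hfin.mem_toFinset.2 hx⟩
  refine Set.Finite.of_injOn (fun m (hm : weight d m = k) => ?_) (mulPointwise_injective hd).injOn
    (Finset.finite_toSet (Finset.finsuppAntidiag S k))
  rw [Finset.mem_coe, ← hm]
  exact mulPointwise_mem_finsuppAntidiag d (support_subset_of_weight_eq hS hm)

end Finsupp

namespace PowerSeries

variable {R : Type*} [CommRing R]

open Finsupp in
theorem coeff_prod_expand {P : Type*} (S : Finset P)
    {d : P → ℕ} (hd : ∀ x, d x ≠ 0) (φ : P → R⟦X⟧) (k : ℕ) {Ξ : Finset (P →₀ ℕ)}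
    (hΞ : ∀ m, m ∈ Ξ ↔ m.support ⊆ S ∧ weight d m = k) :
    coeff k (∏ x ∈ S, expand (d x) (hd x) (φ x)) = ∑ m ∈ Ξ, ∏ x ∈ S, coeff (m x) (φ x) := by
  classical
  have hvanish : ∀ l ∈ Finset.finsuppAntidiag S k,
      ∏ x ∈ S, coeff (l x) (expand (d x) (hd x) (φ x)) ≠ 0 → ∀ x, d x ∣ l x := by
    intro l hl hne x
    by_contra hndvd
    have hx : x ∈ l.support := mem_support_iff.2 fun h => hndvd (h ▸ dvd_zero _)
    exact hne (Finset.prod_eq_zero ((Finset.mem_finsuppAntidiag.1 hl).2 hx)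
      (coeff_expand_of_not_dvd _ _ _ hndvd))
  -- The surviving indices `l` are exactly the `m * d` with `m ∈ Ξ`.
  rw [coeff_prod, ← Finset.sum_filter_of_ne hvanish]
  refine Finset.sum_nbij' (divPointwise · d) (mulPointwise · d) (fun l hl => ?_) (fun m hm => ?_)
    (fun l hl => mulPointwise_divPointwise (Finset.mem_filter.1 hl).2)
    (fun m _ => divPointwise_mulPointwise hd m) (fun l hl => ?_)
  · obtain ⟨hl, hdvd⟩ := Finset.mem_filter.1 hl
    obtain ⟨hsum, hsupp⟩ := Finset.mem_finsuppAntidiag.1 hl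
    have hsupp' : (l.divPointwise d).support ⊆ S := support_onFinset_subset.trans hsupp
    refine (hΞ _).2 ⟨hsupp', ?_⟩
    rw [weight_eq_sum_of_support_subset d hsupp', ← hsum]
    exact Finset.sum_congr rfl fun x _ => Nat.div_mul_cancel (hdvd x)
  · obtain ⟨hsupp, hweight⟩ := (hΞ m).1 hm
    refine Finset.mem_filter.2 ⟨hweight ▸ mulPointwise_mem_finsuppAntidiag d hsupp, fun x => ?_⟩
    exact Dvd.intro_left _ rfl
  · refine Finset.prod_congr rfl fun x _ => ?_
    rw [coeff_expand, if_pos ((Finset.mem_filter.1 hl).2 x), divPointwise_apply]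

/-- The Euler factor `(1 - u z) / (1 - z)`; the factor of `ζ_X(z) / ζ_X(t z)` at a point of
degree `d` is `expand d (eulerFactorRatio (t ^ d))`. -/
noncomputable def eulerFactorRatio (u : R) : R⟦X⟧ :=
  mk fun n => if n = 0 then 1 else 1 - u

lemma coeff_eulerFactorRatio (u : R) (n : ℕ) :
    coeff n (eulerFactorRatio u) = if n = 0 then 1 else 1 - u :=
  coeff_mk _ _

lemma eulerFactorRatio_mul_one_sub_X (u : R) : eulerFactorRatio u * (1 - X) = 1 - C u * X := by
  ext (_ | _ | n) <;>
    simp [coeff_eulerFactorRatio, mul_sub, coeff_one, coeff_C_mul, coeff_X, coeff_succ_mul_X,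
      coeff_zero_mul_X, -coeff_zero_eq_constantCoeff]

lemma expand_eulerFactorRatio_mul (u : R) {d : ℕ} (hd : d ≠ 0) :
    expand d hd (eulerFactorRatio u) * (1 - X ^ d) = 1 - C u * X ^ d := by
  simpa [expand_C] using congrArg (expand d hd) (eulerFactorRatio_mul_one_sub_X u)

theorem coeff_prod_expand_eulerFactorRatio {P : Type*} (S : Finset P) {d : P → ℕ}
    (hd : ∀ x, d x ≠ 0) (u : P → R) (k : ℕ) {Ξ : Finset (P →₀ ℕ)}
    (hΞ : ∀ m, m ∈ Ξ ↔ m.support ⊆ S ∧ Finsupp.weight d m = k) :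
    coeff k (∏ x ∈ S, expand (d x) (hd x) (eulerFactorRatio (u x))) =
      ∑ m ∈ Ξ, ∏ x ∈ m.support, (1 - u x) := by
  rw [coeff_prod_expand S hd _ k hΞ]
  refine Finset.sum_congr rfl fun m hm => ?_
  rw [← Finset.prod_subset ((hΞ m).1 hm).1 fun x _ hx => by
    rw [coeff_eulerFactorRatio, if_pos (Finsupp.notMem_support_iff.1 hx)]]
  exact Finset.prod_congr rfl fun x hx => by
    rw [coeff_eulerFactorRatio, if_neg (Finsupp.mem_support_iff.1 hx)]

theorem coeff_sum_range_mul_of_le (f g : R⟦X⟧) {k N : ℕ} (hk : k ≤ N) :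
    coeff k ((∑ s ∈ Finset.range (N + 1), C (coeff s f) * X ^ s) * g) = coeff k (f * g) := by
  have htrunc : (∑ s ∈ Finset.range (N + 1), C (coeff s f) * X ^ s : R⟦X⟧) = trunc (N + 1) f := by
    ext n
    simp [coeff_trunc]
  have hk' : k < N + 1 := Nat.lt_succ_of_le hk
  rw [htrunc, coeff_mul_eq_coeff_trunc_mul_trunc _ _ hk', trunc_trunc,
    ← coeff_mul_eq_coeff_trunc_mul_trunc _ _ hk']

end PowerSeries

open PowerSeries in
/-- let `R` be a commutative ring, `t ∈ R`, and `P` a type with a degree map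
`deg : P → ℕ` with `deg x ≥ 1` and finite fibres.  Then (i) for every `s` the set `Ξ_s` of
finitely supported `m : P →₀ ℕ` with `Σ_x m(x)·deg(x) = s` is finite, and (ii) with
`ξ_s := Σ_{m ∈ Ξ_s} Π_{x ∈ supp m} (1 − t^{deg x})`, for every `N` one has
`(Σ_{s≤N} ξ_s z^s) · Π_{deg x ≤ N} (1 − z^{deg x}) ≡ Π_{deg x ≤ N} (1 − t^{deg x} z^{deg x})
(mod z^{N+1})` in `R⟦z⟧`. -/
theorem xi_zeta_identity {R : Type*} [CommRing R] (t : R) {P : Type*} (deg : P → ℕ)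
    (hdeg : ∀ x : P, 1 ≤ deg x) (hfib : ∀ d : ℕ, {x : P | deg x = d}.Finite) :
    (∀ s : ℕ, {m : P →₀ ℕ | (m.sum fun x k => k * deg x) = s}.Finite) ∧
    (∀ (hΞ : ∀ s : ℕ, {m : P →₀ ℕ | (m.sum fun x k => k * deg x) = s}.Finite)
      (N : ℕ) (hN : {x : P | deg x ≤ N}.Finite), ∀ k ≤ N,
      (coeff (R := R) k)
        ((∑ s ∈ Finset.range (N + 1),
            C (R := R) (∑ m ∈ (hΞ s).toFinset, ∏ x ∈ m.support, (1 - t ^ deg x)) * X ^ s) *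
          ∏ x ∈ hN.toFinset, (1 - (X : R⟦X⟧) ^ deg x)) =
      (coeff (R := R) k)
        (∏ x ∈ hN.toFinset, (1 - C (R := R) (t ^ deg x) * (X : R⟦X⟧) ^ deg x))) := by
  have hd : ∀ x, deg x ≠ 0 := fun x => Nat.one_le_iff_ne_zero.1 (hdeg x)
  -- `Finsupp.weight deg m` is definitionally `m.sum fun x k => k * deg x`.
  refine ⟨Finsupp.finite_setOf_weight_eq hd hfib, fun hΞ N hN k hk => ?_⟩
  set A := ∏ x ∈ hN.toFinset, expand (deg x) (hd x) (eulerFactorRatio (t ^ deg x))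
  have hξ : ∀ s ∈ Finset.range (N + 1),
      ∑ m ∈ (hΞ s).toFinset, ∏ x ∈ m.support, (1 - t ^ deg x) = coeff s A := fun s hs =>
    (coeff_prod_expand_eulerFactorRatio _ hd _ s fun m => by
      rw [Set.Finite.mem_toFinset]
      refine ⟨fun hm => ⟨Finsupp.support_subset_of_weight_eq (fun x hx => ?_) hm, hm⟩, And.right⟩
      exact hN.mem_toFinset.2 (hx.trans (Finset.mem_range_succ_iff.1 hs))).symm
  rw [Finset.sum_congr rfl fun s hs => by rw [hξ s hs], coeff_sum_range_mul_of_le _ _ hk,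
    ← Finset.prod_mul_distrib]
  exact congrArg (coeff k) (Finset.prod_congr rfl fun x _ => expand_eulerFactorRatio_mul _ (hd x))
end

section
/- Let R be a commutative ring and t ∈ R. Let P be a type with a degree map deg : P → ℕ such that deg x ≥ 1 for all x and {x : P | deg x = d} is finite for every d, and let p ∈ P be a distinguished point with deg p = 1. For s ≥ 0 let ξ_s := Σ_m Π_{x ∈ supp(m)} (1 − t^{deg x}), the sum over finitely supported m : P → ℕ with Σ_x m(x)·deg(x) = s, and let ξ_s° be the analogous sum restricted to those m with m(p) = 0. Then ξ_0 = ξ_0° = 1, and for every s ≥ 1 one has ξ_s − ξ_{s−1} = ξ_s° − t·ξ_{s−1}° (equivalently, ξ_s° + (1 − t)·Σ_{β=0}^{s−1} ξ_β° = ξ_s; equivalently, (Σ_s ξ_s° z^s)(1 − t z) = (Σ_s ξ_s z^s)(1 − z) in R⟦z⟦). -/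
/-!
Sort the `m` of weight `s` by `k = m p`. Erasing `p` identifies those with `m p = k` with the
`m'` of weight `s - k` vanishing at `p`, and changes the product by the factor `1 - t` exactly
when `k ≠ 0`. Hence `ξ s = ξ' s + (1 - t) * ∑_{n < s} ξ' n`, and the identity is the difference
of two consecutive instances of this.
-/

open Finset

namespace Finsupp

variable {P : Type*}

lemma prod_support_eq_ite_mul_prod_support_erase {M N : Type*} [Zero M] [DecidableEq M]
    [CommMonoid N] (g : P → N) (m : P →₀ M) (p : P) :
    ∏ x ∈ m.support, g x = (if m p = 0 then 1 else g p) * ∏ x ∈ (m.erase p).support, g x := by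
  classical
  rw [support_erase]
  split_ifs with hp
  · rw [one_mul, Finset.erase_eq_of_notMem (notMem_support_iff.mpr hp)]
  · rw [Finset.mul_prod_erase _ _ (mem_support_iff.mpr hp)]

variable (deg : P → ℕ) (p : P)

lemma weight_erase_add_mul (m : P →₀ ℕ) :
    weight deg (m.erase p) + m p * deg p = weight deg m := by
  conv_rhs => rw [← erase_add_single p m, map_add, weight_single, smul_eq_mul]

lemma weight_eq_zero_iff_of_one_le (hdeg : ∀ x, 1 ≤ deg x) {m : P →₀ ℕ} :
    weight deg m = 0 ↔ m = 0 :=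
  have : NonTorsionWeight ℕ deg :=
    nonTorsionWeight_of ℕ deg fun x => Nat.one_le_iff_ne_zero.mp (hdeg x)
  weight_eq_zero_iff_eq_zero deg

variable {R : Type*} [CommRing R] (g : P → R)

lemma sum_prod_support_fiber_apply_eq (hp : deg p = 1) {s k : ℕ} (hk : k ≤ s)
    (hA : {m : P →₀ ℕ | weight deg m = s}.Finite)
    (hB : {m : P →₀ ℕ | m p = 0 ∧ weight deg m = s - k}.Finite) :
    ∑ m ∈ hA.toFinset with m p = k, ∏ x ∈ m.support, g x =
      (if k = 0 then 1 else g p) * ∑ m ∈ hB.toFinset, ∏ x ∈ m.support, g x := by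
  rw [Finset.mul_sum]
  refine Finset.sum_nbij' (erase p) (· + single p k) ?_ ?_ ?_ ?_ ?_
  · intro m hm
    rw [mem_filter, Set.Finite.mem_toFinset] at hm
    obtain ⟨hm, rfl⟩ := hm
    have hweight := weight_erase_add_mul deg p m
    rw [hp, mul_one, hm] at hweight
    rw [Set.Finite.mem_toFinset]
    exact ⟨erase_same, by omega⟩
  · intro m hm
    rw [Set.Finite.mem_toFinset] at hm
    rw [mem_filter, Set.Finite.mem_toFinset]
    refine ⟨?_, by rw [add_apply, hm.1, single_eq_same, zero_add]⟩
    show weight deg (m + single p k) = s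
    rw [map_add, weight_single, smul_eq_mul, hp, mul_one, hm.2]
    omega
  · intro m hm
    exact (mem_filter.mp hm).2 ▸ erase_add_single p m
  · intro m hm
    rw [Set.Finite.mem_toFinset] at hm
    rw [erase_add, erase_single, add_zero, erase_of_notMem_support (notMem_support_iff.mpr hm.1)]
  · intro m hm
    rw [← (mem_filter.mp hm).2, prod_support_eq_ite_mul_prod_support_erase g m p]

lemma sum_prod_support_weight_eq_add_sum_range (hp : deg p = 1) {s : ℕ}
    (hA : {m : P →₀ ℕ | weight deg m = s}.Finite)
    (hB : ∀ n, {m : P →₀ ℕ | m p = 0 ∧ weight deg m = n}.Finite) :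
    ∑ m ∈ hA.toFinset, ∏ x ∈ m.support, g x =
      ∑ m ∈ (hB s).toFinset, ∏ x ∈ m.support, g x +
        g p * ∑ n ∈ range s, ∑ m ∈ (hB n).toFinset, ∏ x ∈ m.support, g x := by
  have hle : ∀ m ∈ hA.toFinset, m p ∈ range (s + 1) := fun m hm => by
    rw [Set.Finite.mem_toFinset] at hm
    exact mem_range_succ_iff.mpr (hm ▸ le_weight deg (by omega) m)
  have hfiber : ∀ k ∈ range (s + 1), ∑ m ∈ hA.toFinset with m p = k, ∏ x ∈ m.support, g x =
      (if k = 0 then 1 else g p) * ∑ m ∈ (hB (s - k)).toFinset, ∏ x ∈ m.support, g x :=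
    fun k hk => sum_prod_support_fiber_apply_eq deg p g hp (mem_range_succ_iff.mp hk) hA _
  rw [← sum_fiberwise_of_maps_to hle, Finset.sum_congr rfl hfiber, sum_range_succ', if_pos rfl,
    one_mul, add_comm, Finset.mul_sum]
  conv_rhs => rw [← sum_range_reflect]
  refine congrArg _ (Finset.sum_congr rfl fun n hn => ?_)
  rw [if_neg n.succ_ne_zero, show s - (n + 1) = s - 1 - n by omega]

end Finsupp

theorem xi_circ_identity_general {R : Type*} [CommRing R] (t : R) {P : Type*} (deg : P → ℕ)
    (hdeg : ∀ x : P, 1 ≤ deg x)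
    (p : P) (hp : deg p = 1)
    (hΞ : ∀ s : ℕ, {m : P →₀ ℕ | (m.sum fun x k => k * deg x) = s}.Finite)
    (hΞ' : ∀ s : ℕ, {m : P →₀ ℕ | m p = 0 ∧ (m.sum fun x k => k * deg x) = s}.Finite)
    (ξ ξ' : ℕ → R)
    (hξ : ∀ s : ℕ, ξ s = ∑ m ∈ (hΞ s).toFinset, ∏ x ∈ m.support, (1 - t ^ deg x))
    (hξ' : ∀ s : ℕ, ξ' s = ∑ m ∈ (hΞ' s).toFinset, ∏ x ∈ m.support, (1 - t ^ deg x)) :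
    ξ 0 = 1 ∧ ξ' 0 = 1 ∧ ∀ s : ℕ, 1 ≤ s → ξ s - ξ (s - 1) = ξ' s - t * ξ' (s - 1) := by
  -- `Finsupp.weight deg m` is definitionally `m.sum fun x k => k * deg x`.
  have hweight_eq_zero (m : P →₀ ℕ) : (m.sum fun x k => k * deg x) = 0 ↔ m = 0 :=
    Finsupp.weight_eq_zero_iff_of_one_le deg hdeg
  have hdecomp (s : ℕ) : ξ s = ξ' s + (1 - t) * ∑ n ∈ range s, ξ' n := by
    have key := Finsupp.sum_prod_support_weight_eq_add_sum_range deg p (fun x => 1 - t ^ deg x)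
      hp (hΞ s) hΞ'
    rw [hp, pow_one] at key
    simp only [hξ, hξ']
    exact key
  refine ⟨?_, ?_, fun s hs => ?_⟩
  · rw [hξ, show (hΞ 0).toFinset = {0} from Finset.ext fun m => by simp [hweight_eq_zero]]
    simp
  · rw [hξ', show (hΞ' 0).toFinset = {0} from
      Finset.ext fun m => by simp +contextual [hweight_eq_zero]]
    simp
  · obtain ⟨n, rfl⟩ := Nat.exists_eq_add_of_le' hs
    rw [Nat.add_sub_cancel, hdecomp, hdecomp, sum_range_succ]
    ring

/-- let `R` be a commutative ring, `t ∈ R`, `P` a type with degree map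
`deg : P → ℕ` with `deg x ≥ 1` and finite fibres, and `p ∈ P` with `deg p = 1`.  With
`ξ_s := Σ_m Π_{x ∈ supp m} (1 − t^{deg x})` (sum over finitely supported `m` with
`Σ m(x)·deg x = s`) and `ξ°_s` the analogous sum restricted to `m` with `m p = 0`,
one has `ξ_0 = ξ°_0 = 1` and `ξ_s − ξ_{s−1} = ξ°_s − t·ξ°_{s−1}` for all `s ≥ 1`. -/
theorem xi_circ_identity {R : Type*} [CommRing R] (t : R) {P : Type*} (deg : P → ℕ)
    (hdeg : ∀ x : P, 1 ≤ deg x) (hfib : ∀ d : ℕ, {x : P | deg x = d}.Finite)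
    (p : P) (hp : deg p = 1)
    (hΞ : ∀ s : ℕ, {m : P →₀ ℕ | (m.sum fun x k => k * deg x) = s}.Finite)
    (hΞ' : ∀ s : ℕ, {m : P →₀ ℕ | m p = 0 ∧ (m.sum fun x k => k * deg x) = s}.Finite)
    (ξ ξ' : ℕ → R)
    (hξ : ∀ s : ℕ, ξ s = ∑ m ∈ (hΞ s).toFinset, ∏ x ∈ m.support, (1 - t ^ deg x))
    (hξ' : ∀ s : ℕ, ξ' s = ∑ m ∈ (hΞ' s).toFinset, ∏ x ∈ m.support, (1 - t ^ deg x)) :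
    ξ 0 = 1 ∧ ξ' 0 = 1 ∧ ∀ s : ℕ, 1 ≤ s → ξ s - ξ (s - 1) = ξ' s - t * ξ' (s - 1) :=
  xi_circ_identity_general t deg hdeg p hp hΞ hΞ' ξ ξ' hξ hξ'
end

section
/- Fix integers g (a genus), n ≥ 1 and k ≥ 1, and set m = k·n. For d, e : Fin n → ℤ define the cyclic Euler pairing ⟨d,e⟩_n := Σ_{i=0}^{n−1} d_i·(e_i − e_{(i+1) mod n}), and for r, s ∈ ℤ define the Euler form ⟨(r,d),(s,e)⟩_n := r·s·(1−g) + r·e₀ − d_{n−1}·s + ⟨d,e⟩_n. Define the refinement map Φ : (Fin n → ℤ) → (Fin m → ℤ) by (Φd)_j = d_{⌊j/k⌋} for 0 ≤ j < m (each entry repeated k times in order). Then for all r, s ∈ ℤ and d, e : Fin n → ℤ one has ⟨(r, Φd),(s, Φe)⟩_m = ⟨(r,d),(s,e)⟩_n. -/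
/-- The cyclic Euler pairing `⟨d,e⟩_n = Σ_{i} d_i·(e_i − e_{(i+1) mod n})` on `Fin n → ℤ`. -/
def cyclicPairing (n : ℕ) [NeZero n] (d e : Fin n → ℤ) : ℤ :=
  ∑ i : Fin n, d i * (e i - e (i + 1))

/-- The Euler form `⟨(r,d),(s,e)⟩_n = r·s·(1−g) + r·e₀ − d_{n−1}·s + ⟨d,e⟩_n` of a genus-`g`
curve with an `n`-th root stack point. -/
def eulerForm (g : ℤ) (n : ℕ) [NeZero n] (r s : ℤ) (d e : Fin n → ℤ) : ℤ :=
  r * s * (1 - g) + r * e 0 -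
    d ⟨n - 1, Nat.sub_lt (Nat.pos_of_ne_zero (NeZero.ne n)) Nat.one_pos⟩ * s +
    cyclicPairing n d e

/-- The refinement map `Φ : (Fin n → ℤ) → (Fin m → ℤ)`, `(Φ d)_j = d_{⌊j/k⌋}` for `m = k·n`
(each entry repeated `k` times in order). -/
def refineMap (n k : ℕ) [NeZero k] (d : Fin n → ℤ) : Fin (k * n) → ℤ :=
  fun j => d ⟨(j : ℕ) / k, Nat.div_lt_of_lt_mul j.isLt⟩


/-! On the block `k i ≤ j < k (i + 1)` the refined `d` is the constant `d i`, so the block's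
contribution to the cyclic pairing telescopes to `d i (e i - e (i + 1))`; the boundary terms of
the Euler form are unchanged since `(Φ e)₀ = e₀` and `(Φ d)_{kn-1} = d_{n-1}`. -/

open Finset Fin.NatCast

theorem Finset.sum_range_mul {M : Type*} [AddCommMonoid M] (f : ℕ → M) (k n : ℕ) :
    ∑ j ∈ range (k * n), f j = ∑ i ∈ range n, ∑ t ∈ range k, f (k * i + t) := by
  induction n with
  | zero => simp
  | succ n ih => rw [Nat.mul_succ, sum_range_add, ih, sum_range_succ]

theorem cyclicPairing_eq_sum_range (n : ℕ) [NeZero n] (d e : Fin n → ℤ) :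
    cyclicPairing n d e = ∑ i ∈ range n, d i * (e i - e (i + 1 : ℕ)) := by
  rw [cyclicPairing, ← Fin.sum_univ_eq_sum_range]
  simp only [Fin.cast_val_eq_self, Nat.cast_add, Nat.cast_one]

theorem Nat.mul_sub_one_div {k : ℕ} (hk : 0 < k) (n : ℕ) : (k * n - 1) / k = n - 1 := by
  rcases n with _ | n
  · simp
  · rw [Nat.add_sub_cancel, Nat.mul_succ]
    exact Nat.div_eq_of_lt_le (by rw [Nat.mul_comm]; omega)
      (by rw [Nat.succ_mul, Nat.mul_comm]; omega)

section refineMap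

variable {n k : ℕ} [NeZero k]

theorem refineMap_apply_of_div_eq (d : Fin n → ℤ) {j : Fin (k * n)} {i : Fin n}
    (h : (j : ℕ) / k = i) : refineMap n k d j = d i :=
  congrArg d (Fin.ext h)

theorem refineMap_natCast [NeZero n] (d : Fin n → ℤ) (j : ℕ) :
    refineMap n k d j = d (j / k : ℕ) :=
  refineMap_apply_of_div_eq d <| by
    rw [Fin.val_natCast, Nat.mod_mul_right_div_self, Fin.val_natCast]

theorem cyclicPairing_refineMap [NeZero n] (d e : Fin n → ℤ) :
    cyclicPairing (k * n) (refineMap n k d) (refineMap n k e) = cyclicPairing n d e := by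
  have hk : 0 < k := Nat.pos_of_neZero k
  have block_div (i t : ℕ) (ht : t < k) : (k * i + t) / k = i := by
    rw [Nat.mul_add_div hk, Nat.div_eq_of_lt ht, add_zero]
  rw [cyclicPairing_eq_sum_range, cyclicPairing_eq_sum_range, sum_range_mul]
  refine sum_congr rfl fun i _ => ?_
  set E : ℕ → ℤ := fun j => e (j / k : ℕ)
  calc ∑ t ∈ range k, refineMap n k d (k * i + t : ℕ) *
          (refineMap n k e (k * i + t : ℕ) - refineMap n k e (k * i + t + 1 : ℕ))
      = ∑ t ∈ range k, d i * (E (k * i + t) - E (k * i + (t + 1))) := by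
        refine sum_congr rfl fun t ht => ?_
        simp only [refineMap_natCast, E]
        rw [block_div i t (mem_range.1 ht), add_assoc]
    _ = d i * (E (k * i) - E (k * (i + 1))) := by
        rw [← mul_sum, sum_range_sub' (fun t => E (k * i + t)), add_zero, Nat.mul_succ]
    _ = d i * (e i - e (i + 1 : ℕ)) := by
        simp only [E, Nat.mul_div_cancel_left _ hk]

end refineMap

/-- for all `r, s ∈ ℤ` and `d, e : Fin n → ℤ`, the Euler form of genus `g`
is preserved under the refinement map: `⟨(r, Φd),(s, Φe)⟩_{kn} = ⟨(r,d),(s,e)⟩_n`. -/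
theorem eulerForm_refineMap (g : ℤ) (n k : ℕ) [NeZero n] [NeZero k] [NeZero (k * n)]
    (r s : ℤ) (d e : Fin n → ℤ) :
    eulerForm g (k * n) r s (refineMap n k d) (refineMap n k e) = eulerForm g n r s d e := by
  have first : refineMap n k e 0 = e 0 := refineMap_apply_of_div_eq e (Nat.zero_div k)
  have last (h : k * n - 1 < k * n) (h' : n - 1 < n) :
      refineMap n k d ⟨k * n - 1, h⟩ = d ⟨n - 1, h'⟩ :=
    refineMap_apply_of_div_eq d (Nat.mul_sub_one_div (Nat.pos_of_neZero k) n)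
  rw [eulerForm, eulerForm, cyclicPairing_refineMap, first, last]
end

section
/- For each positive integer n let G_n be the additive group of functions Fin n → ℤ, and for n ∣ m define Φ_{m,n} : G_n → G_m by (Φ_{m,n} d)_j = d_{⌊j·n/m⌋} (each entry repeated m/n times in order). Then: (i) Φ_{n,n} = id and Φ_{l,m} ∘ Φ_{m,n} = Φ_{l,n} whenever n ∣ m ∣ l, so (G_n, Φ_{m,n}) is a directed system of abelian groups over the positive integers ordered by divisibility; (ii) let S be the additive group of functions f : ℚ → ℤ that are 1-periodic and such that for some n ≥ 1, f is constant on [i/n,(i+1)/n) ∩ ℚ for every 0 ≤ i < n; then the maps G_n → S sending d to f_d, where f_d(x) = d_{⌊n·(x − ⌊x⌋)⌋}, are compatible with the Φ_{m,n} and induce an isomorphism of abelian groups from the direct limit of the system (G_n, Φ_{m,n}) onto S. -/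
/-- The transition map `Φ_{m,n} : (Fin n → ℤ) → (Fin m → ℤ)` for `n ∣ m`, given by
`(Φ_{m,n} d)_j = d_{⌊j·n/m⌋}` (each entry repeated `m/n` times in order). -/
def refineTo {n m : ℕ} (h : n ∣ m) (d : Fin n → ℤ) : Fin m → ℤ := fun j =>
  d ⟨(j : ℕ) * n / m, by
    obtain ⟨k, rfl⟩ := h
    have hj : (j : ℕ) < n * k := j.isLt
    have hn : 0 < n := by
      rcases Nat.eq_zero_or_pos n with h0 | h0
      · subst h0; simp at hj
      · exact h0
    exact Nat.div_lt_of_lt_mul (by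
      calc (j : ℕ) * n < n * k * n := by
            exact Nat.mul_lt_mul_of_lt_of_le hj le_rfl hn
        _ = n * k * n := rfl)⟩

/-- The group of 1-periodic functions `f : ℚ → ℤ` that, for some `n ≥ 1`, are constant on
each interval `[i/n, (i+1)/n) ∩ ℚ`, `0 ≤ i < n`. -/
def IsStepFn (f : ℚ → ℤ) : Prop :=
  (∀ x : ℚ, f (x + 1) = f x) ∧
  ∃ n : ℕ, 0 < n ∧ ∀ i : ℕ, i < n → ∀ x : ℚ,
    (i : ℚ) / n ≤ x → x < ((i : ℚ) + 1) / n → f x = f ((i : ℚ) / n)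

/-- The step function `f_d : ℚ → ℤ`, `f_d(x) = d_{⌊n·(x − ⌊x⌋)⌋}`, attached to
`d : Fin n → ℤ`. -/
def toStepFn {n : ℕ} (hn : 0 < n) (d : Fin n → ℤ) : ℚ → ℤ := fun x =>
  d ⟨(⌊(n : ℚ) * Int.fract x⌋).toNat, by
    have hnq : (0 : ℚ) < n := by exact_mod_cast hn
    have h1 : ⌊(n : ℚ) * Int.fract x⌋ < (n : ℤ) := by
      apply Int.floor_lt.mpr
      push_cast
      nlinarith [Int.fract_nonneg x, Int.fract_lt_one x]
    omega⟩


/-!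
The index of `x` in the grid of mesh `1/n` is `⌊n · fract x⌋₊`; refining the grid to mesh
`1/(n·a)` divides that index by `a` (`Nat.floor_div_natCast`), which is exactly what
`Φ_{na,n}` does to indices. So `d ↦ f_d` is compatible with the transition maps, and it is
injective on each `G_n` because `f_d (i/n) = d_i`; two elements with the same image therefore
agree after refining both to `G_{nm}`. Conversely a periodic step function of mesh `1/n` is
`f_d` for `d_i = f (i/n)`.
-/

theorem Nat.mul_div_mul_left_right {n : ℕ} (hn : 0 < n) (j a : ℕ) : j * n / (n * a) = j / a := by
  rw [mul_comm j n, Nat.mul_div_mul_left _ _ hn]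

theorem refineTo_self {n : ℕ} (d : Fin n → ℤ) : refineTo (dvd_refl n) d = d := by
  funext j
  simp only [refineTo, Nat.mul_div_cancel _ j.pos]

theorem refineTo_refineTo {n m l : ℕ} (hnm : n ∣ m) (hml : m ∣ l) (d : Fin n → ℤ) :
    refineTo hml (refineTo hnm d) = refineTo (hnm.trans hml) d := by
  funext j
  have hm : 0 < m := Nat.pos_of_dvd_of_pos hml j.pos
  have hn : 0 < n := Nat.pos_of_dvd_of_pos hnm hm
  obtain ⟨a, rfl⟩ := hnm
  obtain ⟨b, rfl⟩ := hml
  simp only [refineTo]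
  congr 2
  generalize (j : ℕ) = k
  rw [Nat.mul_div_mul_left_right hm, Nat.mul_div_mul_left_right hn, mul_assoc n a b,
    Nat.mul_div_mul_left_right hn, Nat.div_div_eq_div_mul, mul_comm b a]

section StepFunctions

variable {n : ℕ} (hn : 0 < n)

include hn in
theorem natFloor_mul_fract_lt (x : ℚ) : ⌊(n : ℚ) * Int.fract x⌋₊ < n := by
  rw [Nat.floor_lt (by positivity)]
  exact mul_lt_of_lt_one_right (by exact_mod_cast hn) (Int.fract_lt_one x)

theorem toStepFn_apply (d : Fin n → ℤ) (x : ℚ) :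
    toStepFn hn d x = d ⟨⌊(n : ℚ) * Int.fract x⌋₊, natFloor_mul_fract_lt hn x⟩ := by
  simp only [toStepFn, Int.floor_toNat]

include hn in
theorem natFloor_mul_eq_iff {t : ℚ} (ht : 0 ≤ t) (i : ℕ) :
    ⌊(n : ℚ) * t⌋₊ = i ↔ (i : ℚ) / n ≤ t ∧ t < ((i : ℚ) + 1) / n := by
  have hnq : (0 : ℚ) < n := by exact_mod_cast hn
  rw [Nat.floor_eq_iff (by positivity), div_le_iff₀ hnq, lt_div_iff₀ hnq, mul_comm t]

theorem toStepFn_eq_of_mem (d : Fin n → ℤ) {i : ℕ} (hi : i < n) {x : ℚ}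
    (h₁ : (i : ℚ) / n ≤ x) (h₂ : x < ((i : ℚ) + 1) / n) : toStepFn hn d x = d ⟨i, hi⟩ := by
  have hx₀ : 0 ≤ x := le_trans (by positivity) h₁
  have hx₁ : x < 1 := h₂.trans_le <| (div_le_one (by exact_mod_cast hn)).2 (by exact_mod_cast hi)
  rw [toStepFn_apply]
  congr
  rw [Int.fract_eq_self.2 ⟨hx₀, hx₁⟩, natFloor_mul_eq_iff hn hx₀]
  exact ⟨h₁, h₂⟩

theorem toStepFn_div (d : Fin n → ℤ) (i : Fin n) : toStepFn hn d ((i : ℚ) / n) = d i :=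
  toStepFn_eq_of_mem hn d i.isLt le_rfl <|
    div_lt_div_of_pos_right (lt_add_one _) (by exact_mod_cast hn)

theorem toStepFn_injective : Function.Injective (toStepFn hn) := fun d e h =>
  funext fun i => by rw [← toStepFn_div hn d i, ← toStepFn_div hn e i, h]

theorem isStepFn_toStepFn (d : Fin n → ℤ) : IsStepFn (toStepFn hn d) := by
  refine ⟨fun x => by simp only [toStepFn_apply, Int.fract_add_one], n, hn, ?_⟩
  intro i hi x h₁ h₂
  rw [toStepFn_eq_of_mem hn d hi h₁ h₂, toStepFn_div hn d ⟨i, hi⟩]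

theorem toStepFn_refineTo {m : ℕ} (hm : 0 < m) (h : n ∣ m) (d : Fin n → ℤ) :
    toStepFn hm (refineTo h d) = toStepFn hn d := by
  obtain ⟨a, rfl⟩ := h
  funext x
  have hna : (n : ℚ) * Int.fract x = ((n * a : ℕ) : ℚ) * Int.fract x / a := by
    have ha : (a : ℚ) ≠ 0 := by exact_mod_cast (Nat.pos_of_mul_pos_left hm).ne'
    rw [Nat.cast_mul, mul_right_comm, mul_div_cancel_right₀ _ ha]
  simp only [toStepFn_apply, refineTo]
  congr 2
  rw [Nat.mul_div_mul_left_right hn, ← Nat.floor_div_natCast, ← hna]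

theorem toStepFn_surjective {f : ℚ → ℤ} (hf : IsStepFn f) :
    ∃ n : ℕ, ∃ hn : 0 < n, ∃ d : Fin n → ℤ, toStepFn hn d = f := by
  obtain ⟨hper, n, hn, hconst⟩ := hf
  refine ⟨n, hn, fun i => f ((i : ℚ) / n), funext fun x => ?_⟩
  have hx : f (Int.fract x) = f x := by
    rw [Int.fract, ← mul_one (⌊x⌋ : ℚ)]
    exact Function.Periodic.sub_int_mul_eq hper ⌊x⌋
  obtain ⟨h₁, h₂⟩ := (natFloor_mul_eq_iff hn (Int.fract_nonneg x) _).1 rfl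
  rw [toStepFn_apply, ← hx, hconst _ (natFloor_mul_fract_lt hn x) _ h₁ h₂]

end StepFunctions

/-- (i) the maps `Φ_{m,n}` form a directed system of abelian groups
`G_n = (Fin n → ℤ)` over the positive integers ordered by divisibility; (ii) the maps
`d ↦ f_d` into the group of periodic step functions `ℚ → ℤ` are additive, compatible with
the transition maps, and induce an isomorphism of the direct limit onto that group
(expressed concretely: joint injectivity in the limit and joint surjectivity). -/
theorem directLimit_step_functions :
    -- (i) directed system
    (∀ n : ℕ, 0 < n → ∀ d : Fin n → ℤ, refineTo (dvd_refl n) d = d) ∧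
    (∀ n m l : ℕ, ∀ hnm : n ∣ m, ∀ hml : m ∣ l, ∀ d : Fin n → ℤ,
      refineTo hml (refineTo hnm d) = refineTo (hnm.trans hml) d) ∧
    (∀ n m : ℕ, ∀ h : n ∣ m, ∀ d e : Fin n → ℤ,
      refineTo h (d + e) = refineTo h d + refineTo h e) ∧
    -- (ii) the maps d ↦ f_d
    (∀ n : ℕ, ∀ hn : 0 < n, ∀ d e : Fin n → ℤ,
      toStepFn hn (d + e) = toStepFn hn d + toStepFn hn e) ∧
    (∀ n : ℕ, ∀ hn : 0 < n, ∀ d : Fin n → ℤ, IsStepFn (toStepFn hn d)) ∧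
    (∀ n m : ℕ, ∀ hn : 0 < n, ∀ hm : 0 < m, ∀ h : n ∣ m, ∀ d : Fin n → ℤ,
      toStepFn hm (refineTo h d) = toStepFn hn d) ∧
    (∀ n m : ℕ, ∀ hn : 0 < n, ∀ hm : 0 < m, ∀ d : Fin n → ℤ, ∀ e : Fin m → ℤ,
      toStepFn hn d = toStepFn hm e →
        ∃ l : ℕ, ∃ _ : 0 < l, ∃ h1 : n ∣ l, ∃ h2 : m ∣ l, refineTo h1 d = refineTo h2 e) ∧
    (∀ f : ℚ → ℤ, IsStepFn f → ∃ n : ℕ, ∃ hn : 0 < n, ∃ d : Fin n → ℤ, toStepFn hn d = f) := by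
  refine ⟨fun _ _ => refineTo_self, fun _ _ _ => refineTo_refineTo, fun _ _ _ _ _ => rfl,
    fun _ _ _ _ => rfl, fun _ => isStepFn_toStepFn, fun _ _ hn hm => toStepFn_refineTo hn hm,
    ?_, fun _ => toStepFn_surjective⟩
  intro n m hn hm d e hde
  have hnm : 0 < n * m := Nat.mul_pos hn hm
  refine ⟨n * m, hnm, dvd_mul_right n m, dvd_mul_left m n, toStepFn_injective hnm ?_⟩
  rw [toStepFn_refineTo hn, toStepFn_refineTo hm, hde]
end

section
/- For reals a < b with b − a < 1, let χ_{a,b} : ℝ → ℤ be the 1-periodic indicator χ_{a,b}(x) = 1 if {x − a} < b − a and 0 otherwise, where {t} := t − ⌊t⌋. Then: (i) for every x ∈ ℝ there is δ > 0 such that χ_{a,b} is constant on [x, x+δ) with value χ_{a,b}(x), and constant on (x−δ, x) with value χ⁻_{a,b}(x) := 1 if 0 < {x − a} ≤ b − a and 0 otherwise; (ii) for reals a < b, c < d with b − a < 1 and d − c < 1, the function x ↦ χ⁻_{a,b}(x)·(χ⁻_{c,d}(x) − χ_{c,d}(x)) vanishes at every x ∈ [0,1) with x ≢ c and x ≢ d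 (mod ℤ), and ⟨χ_{a,b}, χ_{c,d}⟩ := Σ_{x ∈ [0,1)} χ⁻_{a,b}(x)·(χ⁻_{c,d}(x) − χ_{c,d}(x)) = 𝟙[0 < {d−a} ≤ b−a] − 𝟙[0 < {c−a} ≤ b−a]; (iii) consequently the symmetrized pairing satisfies (χ_{a,b}, χ_{c,d}) := ⟨χ_{a,b}, χ_{c,d}⟩ + ⟨χ_{c,d}, χ_{a,b}⟩ = 𝟙[a ≡ c] + 𝟙[b ≡ d] − 𝟙[a ≡ d] − 𝟙[b ≡ c], where x ≡ y means x − y ∈ ℤ. -/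
/-! For `0 ≤ b - a < 1` the indicators are differences of integer parts:
`χ_{a,b}(x) = ⌊x - a⌋ - ⌊x - b⌋` counts the `k ∈ ℤ` with `x - k ∈ [a, b)`,
`χ⁻_{a,b}(x) = ⌈x - a⌉ - ⌈x - b⌉` counts those with `x - k ∈ (a, b]`, and
`𝟙[x ≡ y] = 1 + ⌊x - y⌋ - ⌈x - y⌉`.
Then (i) is the right-continuity of `⌊·⌋` together with `⌊y⌋ = ⌈x⌉ - 1` just left of `x`;
(ii) follows from `χ⁻_{c,d} - χ_{c,d} = 𝟙[· ≡ d] - 𝟙[· ≡ c]`, which localizes the sum at the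
representatives of `c` and `d` in `[0, 1)`; and in (iii) the eight ceilings and floors cancel
in pairs through `⌈-t⌉ = -⌊t⌋`. -/

open scoped Classical

/-- The 1-periodic indicator `χ_{a,b}(x) = 1` iff `{x − a} < b − a` (for `a < b`, `b − a < 1`). -/
noncomputable def chiInd (a b : ℝ) (x : ℝ) : ℤ :=
  if Int.fract (x - a) < b - a then 1 else 0

/-- The left-limit `χ⁻_{a,b}(x) = 1` iff `0 < {x − a} ≤ b − a`. -/
noncomputable def chiIndL (a b : ℝ) (x : ℝ) : ℤ :=
  if 0 < Int.fract (x - a) ∧ Int.fract (x - a) ≤ b - a then 1 else 0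

/-- `x ≡ y` means `x − y ∈ ℤ`. -/
def IntCongr (x y : ℝ) : Prop := ∃ k : ℤ, x - y = (k : ℝ)

open Filter Topology Set Function

lemma floor_sub_floor_sub_eq_ite (u w : ℝ) (hw₀ : 0 ≤ w) (hw₁ : w ≤ 1) :
    ⌊u⌋ - ⌊u - w⌋ = if Int.fract u < w then 1 else 0 := by
  have h₀ := Int.fract_nonneg u
  have h₁ := Int.fract_lt_one u
  rw [show u - w = (Int.fract u - w) + ⌊u⌋ by rw [Int.fract]; ring, Int.floor_add_intCast]
  split_ifs with h
  · rw [show ⌊Int.fract u - w⌋ = -1 from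
      Int.floor_eq_iff.2 ⟨by push_cast; linarith, by push_cast; linarith⟩]
    ring
  · rw [show ⌊Int.fract u - w⌋ = 0 from
      Int.floor_eq_iff.2 ⟨by push_cast; linarith, by push_cast; linarith⟩]
    ring

lemma ceil_sub_ceil_sub_eq_ite (u w : ℝ) (hw₀ : 0 ≤ w) (hw₁ : w < 1) :
    ⌈u⌉ - ⌈u - w⌉ = if 0 < Int.fract u ∧ Int.fract u ≤ w then 1 else 0 := by
  have h₀ := Int.fract_nonneg u
  have h₁ := Int.fract_lt_one u
  rw [show u - w = (Int.fract u - w) + ⌊u⌋ by rw [Int.fract]; ring, Int.ceil_add_intCast,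
    show ⌈u⌉ = ⌈Int.fract u⌉ + ⌊u⌋ by rw [← Int.ceil_add_intCast, Int.fract_add_floor]]
  have hceil : ⌈Int.fract u⌉ = if 0 < Int.fract u then 1 else 0 := by
    split_ifs with h
    · exact Int.ceil_eq_iff.2 ⟨by push_cast; linarith, by push_cast; linarith⟩
    · rw [le_antisymm (not_lt.1 h) h₀, Int.ceil_zero]
  have hceil_sub : ⌈Int.fract u - w⌉ = if Int.fract u ≤ w then 0 else 1 := by
    split_ifs <;> exact Int.ceil_eq_iff.2 ⟨by push_cast; linarith, by push_cast; linarith⟩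
  rw [hceil, hceil_sub]
  by_cases hpos : 0 < Int.fract u <;> by_cases hle : Int.fract u ≤ w <;> simp [hpos, hle]
  linarith

lemma ite_intCongr_eq_one_add_floor_sub_ceil (x y : ℝ) :
    (if IntCongr x y then 1 else 0 : ℤ) = 1 + ⌊x - y⌋ - ⌈x - y⌉ := by
  split_ifs with h
  · obtain ⟨k, hk⟩ := h
    rw [hk, Int.floor_intCast, Int.ceil_intCast]
    ring
  · rw [(Int.ceil_eq_floor_add_one_iff_notMem _).2 fun ⟨k, hk⟩ => h ⟨k, hk.symm⟩]
    ring

lemma chiInd_eq_floor_sub_floor {a b : ℝ} (hab : a ≤ b) (hba : b - a ≤ 1) (x : ℝ) :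
    chiInd a b x = ⌊x - a⌋ - ⌊x - b⌋ := by
  rw [show x - b = x - a - (b - a) by ring,
    floor_sub_floor_sub_eq_ite _ _ (sub_nonneg.2 hab) hba, chiInd]

lemma chiIndL_eq_ceil_sub_ceil {a b : ℝ} (hab : a ≤ b) (hba : b - a < 1) (x : ℝ) :
    chiIndL a b x = ⌈x - a⌉ - ⌈x - b⌉ := by
  rw [show x - b = x - a - (b - a) by ring,
    ceil_sub_ceil_sub_eq_ite _ _ (sub_nonneg.2 hab) hba, chiIndL]

lemma eventually_floor_sub_eq_nhdsGE (x c : ℝ) : ∀ᶠ y in 𝓝[≥] x, ⌊y - c⌋ = ⌊x - c⌋ := by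
  have hx : x < ⌊x - c⌋ + 1 + c := by linarith [Int.lt_floor_add_one (x - c)]
  filter_upwards [Ico_mem_nhdsGE hx] with y ⟨hxy, hy⟩
  exact Int.floor_eq_iff.2 ⟨by linarith [Int.floor_le (x - c)], by linarith⟩

lemma eventually_floor_sub_eq_ceil_sub_nhdsLT (x c : ℝ) :
    ∀ᶠ y in 𝓝[<] x, ⌊y - c⌋ = ⌈x - c⌉ - 1 := by
  have hx : ⌈x - c⌉ - 1 + c < x := by linarith [Int.ceil_lt_add_one (x - c)]
  filter_upwards [Ioo_mem_nhdsLT hx] with y ⟨hy, hyx⟩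
  exact Int.floor_eq_iff.2 ⟨by push_cast; linarith, by push_cast; linarith [Int.le_ceil (x - c)]⟩

lemma eventually_chiInd_eq_nhdsGE {a b : ℝ} (hab : a ≤ b) (hba : b - a ≤ 1) (x : ℝ) :
    ∀ᶠ y in 𝓝[≥] x, chiInd a b y = chiInd a b x := by
  filter_upwards [eventually_floor_sub_eq_nhdsGE x a, eventually_floor_sub_eq_nhdsGE x b]
    with y ha hb
  rw [chiInd_eq_floor_sub_floor hab hba, chiInd_eq_floor_sub_floor hab hba, ha, hb]

lemma eventually_chiInd_eq_chiIndL_nhdsLT {a b : ℝ} (hab : a ≤ b) (hba : b - a < 1) (x : ℝ) :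
    ∀ᶠ y in 𝓝[<] x, chiInd a b y = chiIndL a b x := by
  filter_upwards [eventually_floor_sub_eq_ceil_sub_nhdsLT x a,
    eventually_floor_sub_eq_ceil_sub_nhdsLT x b] with y ha hb
  rw [chiInd_eq_floor_sub_floor hab hba.le, chiIndL_eq_ceil_sub_ceil hab hba, ha, hb]
  ring

lemma exists_pos_of_eventually_nhdsGE_of_eventually_nhdsLT {p q : ℝ → Prop} {x : ℝ}
    (hp : ∀ᶠ y in 𝓝[≥] x, p y) (hq : ∀ᶠ y in 𝓝[<] x, q y) :
    ∃ δ > (0 : ℝ), (∀ y, x ≤ y → y < x + δ → p y) ∧ (∀ y, x - δ < y → y < x → q y) := by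
  obtain ⟨u, hxu, hu⟩ := mem_nhdsGE_iff_exists_Ico_subset.1 hp
  obtain ⟨l, hlx, hl⟩ := mem_nhdsLT_iff_exists_Ioo_subset.1 hq
  have hδu := min_le_left (u - x) (x - l)
  have hδl := min_le_right (u - x) (x - l)
  refine ⟨min (u - x) (x - l), lt_min (sub_pos.2 hxu) (sub_pos.2 hlx),
    fun y hxy hy => hu ⟨hxy, by linarith⟩, fun y hy hyx => hl ⟨by linarith, hyx⟩⟩

lemma chiIndL_sub_chiInd {c d : ℝ} (hcd : c ≤ d) (hdc : d - c < 1) (x : ℝ) :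
    chiIndL c d x - chiInd c d x =
      (if IntCongr x d then 1 else 0) - (if IntCongr x c then 1 else 0) := by
  rw [chiIndL_eq_ceil_sub_ceil hcd hdc, chiInd_eq_floor_sub_floor hcd hdc.le,
    ite_intCongr_eq_one_add_floor_sub_ceil, ite_intCongr_eq_one_add_floor_sub_ceil]
  ring

lemma Ico_inter_setOf_intCongr (y : ℝ) :
    Ico (0 : ℝ) 1 ∩ {x | IntCongr x y} = {Int.fract y} := by
  ext x
  simp only [mem_inter_iff, mem_ofPred_eq, mem_singleton_iff, IntCongr, ← Int.fract_eq_fract]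
  constructor
  · rintro ⟨hx, hxy⟩
    rwa [Int.fract_eq_self.2 hx] at hxy
  · rintro rfl
    exact ⟨⟨Int.fract_nonneg y, Int.fract_lt_one y⟩, Int.fract_fract y⟩

lemma Ico_inter_support_ite_intCongr_subset {M : Type*} [AddCommMonoid M] (f : ℝ → M) (y : ℝ) :
    Ico (0 : ℝ) 1 ∩ support (fun x => if IntCongr x y then f x else 0) ⊆ {Int.fract y} := by
  rw [← Ico_inter_setOf_intCongr y]
  refine inter_subset_inter_right _ fun x hx => ?_
  by_contra hxy
  exact hx (if_neg hxy)

lemma finsum_mem_Ico_ite_intCongr {M : Type*} [AddCommMonoid M] (f : ℝ → M) (y : ℝ) :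
    ∑ᶠ x ∈ Ico (0 : ℝ) 1, (if IntCongr x y then f x else 0) = f (Int.fract y) := by
  obtain ⟨hyI, hy : IntCongr (Int.fract y) y⟩ :
      Int.fract y ∈ Ico (0 : ℝ) 1 ∩ {x | IntCongr x y} := by
    rw [Ico_inter_setOf_intCongr]; rfl
  rw [finsum_mem_inter_support_eq' _ _ {Int.fract y}, finsum_mem_singleton, if_pos hy]
  intro x hx
  exact ⟨fun hxI => Ico_inter_support_ite_intCongr_subset f y ⟨hxI, hx⟩,
    fun hxy => mem_singleton_iff.1 hxy ▸ hyI⟩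

lemma chiIndL_fract (a b y : ℝ) : chiIndL a b (Int.fract y) = chiIndL a b y := by
  rw [chiIndL, chiIndL, show Int.fract y - a = y - a - ⌊y⌋ by rw [Int.fract]; ring,
    Int.fract_sub_intCast]

lemma finsum_chiIndL_mul_sub_chiInd (a b : ℝ) {c d : ℝ} (hcd : c ≤ d) (hdc : d - c < 1) :
    ∑ᶠ x ∈ Ico (0 : ℝ) 1, chiIndL a b x * (chiIndL c d x - chiInd c d x) =
      chiIndL a b d - chiIndL a b c := by
  have hsummand : ∀ x, chiIndL a b x * (chiIndL c d x - chiInd c d x) =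
      (if IntCongr x d then chiIndL a b x else 0) +
        (if IntCongr x c then -chiIndL a b x else 0) := fun x => by
    rw [chiIndL_sub_chiInd hcd hdc]
    split_ifs <;> ring
  simp only [hsummand]
  rw [finsum_mem_add_distrib'
      ((finite_singleton _).subset (Ico_inter_support_ite_intCongr_subset _ d))
      ((finite_singleton _).subset (Ico_inter_support_ite_intCongr_subset _ c)),
    finsum_mem_Ico_ite_intCongr, finsum_mem_Ico_ite_intCongr, chiIndL_fract, chiIndL_fract]
  ring

lemma chiIndL_sub_add_chiIndL_sub {a b c d : ℝ} (hab : a ≤ b) (hba : b - a < 1)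
    (hcd : c ≤ d) (hdc : d - c < 1) :
    chiIndL a b d - chiIndL a b c + (chiIndL c d b - chiIndL c d a) =
      (if IntCongr a c then 1 else 0) + (if IntCongr b d then 1 else 0) -
        (if IntCongr a d then 1 else 0) - (if IntCongr b c then 1 else 0) := by
  simp only [chiIndL_eq_ceil_sub_ceil hab hba, chiIndL_eq_ceil_sub_ceil hcd hdc,
    ite_intCongr_eq_one_add_floor_sub_ceil]
  rw [← neg_sub a d, ← neg_sub b d, ← neg_sub a c, ← neg_sub b c]
  simp only [Int.ceil_neg]
  ring

/-- (i) `χ_{a,b}` is right-locally constant with value `χ_{a,b}(x)` and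
left-locally constant with value `χ⁻_{a,b}(x)`; (ii) the summand
`χ⁻_{a,b}·(χ⁻_{c,d} − χ_{c,d})` vanishes on `[0,1)` away from `x ≡ c, d (mod ℤ)` and
`⟨χ_{a,b}, χ_{c,d}⟩ = Σ_{x∈[0,1)} χ⁻_{a,b}(x)(χ⁻_{c,d}(x) − χ_{c,d}(x))
 = 𝟙[0<{d−a}≤b−a] − 𝟙[0<{c−a}≤b−a]`; (iii) the symmetrized pairing equals
`𝟙[a≡c] + 𝟙[b≡d] − 𝟙[a≡d] − 𝟙[b≡c]`. -/
theorem chi_pairing :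
    -- (i)
    (∀ a b : ℝ, a < b → b - a < 1 → ∀ x : ℝ, ∃ δ > (0 : ℝ),
      (∀ y, x ≤ y → y < x + δ → chiInd a b y = chiInd a b x) ∧
      (∀ y, x - δ < y → y < x → chiInd a b y = chiIndL a b x)) ∧
    -- (ii)
    (∀ a b c d : ℝ, a < b → b - a < 1 → c < d → d - c < 1 →
      (∀ x : ℝ, 0 ≤ x → x < 1 → ¬ IntCongr x c → ¬ IntCongr x d →
        chiIndL a b x * (chiIndL c d x - chiInd c d x) = 0) ∧
      (∑ᶠ x ∈ Set.Ico (0 : ℝ) 1, chiIndL a b x * (chiIndL c d x - chiInd c d x)) =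
        (if 0 < Int.fract (d - a) ∧ Int.fract (d - a) ≤ b - a then 1 else 0) -
        (if 0 < Int.fract (c - a) ∧ Int.fract (c - a) ≤ b - a then 1 else 0)) ∧
    -- (iii)
    (∀ a b c d : ℝ, a < b → b - a < 1 → c < d → d - c < 1 →
      (∑ᶠ x ∈ Set.Ico (0 : ℝ) 1, chiIndL a b x * (chiIndL c d x - chiInd c d x)) +
      (∑ᶠ x ∈ Set.Ico (0 : ℝ) 1, chiIndL c d x * (chiIndL a b x - chiInd a b x)) =
        (if IntCongr a c then 1 else 0) + (if IntCongr b d then 1 else 0) -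
        (if IntCongr a d then 1 else 0) - (if IntCongr b c then 1 else 0)) := by
  refine ⟨fun a b hab hba x => ?_, fun a b c d _ _ hcd hdc => ⟨fun x _ _ hxc hxd => ?_, ?_⟩,
    fun a b c d hab hba hcd hdc => ?_⟩
  · exact exists_pos_of_eventually_nhdsGE_of_eventually_nhdsLT
      (eventually_chiInd_eq_nhdsGE hab.le hba.le x)
      (eventually_chiInd_eq_chiIndL_nhdsLT hab.le hba x)
  · rw [chiIndL_sub_chiInd hcd.le hdc, if_neg hxd, if_neg hxc, sub_zero, mul_zero]
  · exact finsum_chiIndL_mul_sub_chiInd a b hcd.le hdc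
  · rw [finsum_chiIndL_mul_sub_chiInd a b hcd.le hdc, finsum_chiIndL_mul_sub_chiInd c d hab.le hba]
    exact chiIndL_sub_add_chiIndL_sub hab.le hba hcd.le hdc
end

section
/- Let K be a field and u ∈ Kˣ a unit; set v = u² (u plays the role of υ^{1/2}). Let M be the free K-module with basis {u⃗_y}_{y ∈ ℝ}. For reals a < b with b − a < 1 define K-linear endomorphisms of M by: E_{a,b}(u⃗_y) = u⁻¹·u⃗_{y+a−b} if a + y ∈ ℤ and 0 otherwise; F_{a,b}(u⃗_y) = u·u⃗_{y+b−a} if b + y ∈ ℤ and 0 otherwise; and K_{a,b}^{±1}(u⃗_y) = v^{±ε(y)}·u⃗_y where ε(y) = 𝟙[b+y ∈ ℤ] − 𝟙[a+y ∈ ℤ]. Then for all a < b with b − a < 1, the relation (v − v⁻¹)·(E_{a,b} ∘ F_{a,b} − F_{a,b} ∘ E_{a,b}) = K_{a,b} − K_{a,b}^{−1} holds as an equality of K-linear endomorphisms of M. -/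
open scoped Classical

/-- The operator `E_{a,b}` on the free module with basis `{u⃗_y}_{y∈ℝ}`:
`E_{a,b}(u⃗_y) = u⁻¹·u⃗_{y+a−b}` if `a + y ∈ ℤ`, and `0` otherwise. -/
noncomputable def Eop {K : Type*} [Field K] (u : Kˣ) (a b : ℝ) :
    (ℝ →₀ K) →ₗ[K] (ℝ →₀ K) :=
  Finsupp.lsum K fun y =>
    if ∃ k : ℤ, a + y = (k : ℝ) then ((u⁻¹ : Kˣ) : K) • Finsupp.lsingle (y + a - b) else 0

/-- The operator `F_{a,b}`: `F_{a,b}(u⃗_y) = u·u⃗_{y+b−a}` if `b + y ∈ ℤ`, and `0` otherwise. -/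
noncomputable def Fop {K : Type*} [Field K] (u : Kˣ) (a b : ℝ) :
    (ℝ →₀ K) →ₗ[K] (ℝ →₀ K) :=
  Finsupp.lsum K fun y =>
    if ∃ k : ℤ, b + y = (k : ℝ) then ((u : K)) • Finsupp.lsingle (y + b - a) else 0

/-- The operator `K_{c,d}^{s}` (for `s = ±1`): `K_{c,d}^{s}(u⃗_y) = v^{s·ε(y)}·u⃗_y`, where
`v = u²` and `ε(y) = 𝟙[d+y ∈ ℤ] − 𝟙[c+y ∈ ℤ]`. -/
noncomputable def Kop {K : Type*} [Field K] (u : Kˣ) (c d : ℝ) (s : ℤ) :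
    (ℝ →₀ K) →ₗ[K] (ℝ →₀ K) :=
  Finsupp.lsum K fun y =>
    ((((u ^ 2) ^ (s * ((if ∃ k : ℤ, d + y = (k : ℝ) then 1 else 0) -
        (if ∃ k : ℤ, c + y = (k : ℝ) then 1 else 0)))) : Kˣ) : K) • Finsupp.lsingle y


/-! On `u⃗_y`, `E∘F` and `F∘E` act by the indicators of `b + y ∈ ℤ` and `a + y ∈ ℤ`, so the
commutator acts by `ε(y) ∈ {−1, 0, 1}`, the exponent of `v` in `K_{a,b}(u⃗_y)`; and
`(v − v⁻¹)·ε = v^ε − v^{−ε}` for such `ε`. -/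

noncomputable def intervalWeight (a b y : ℝ) : ℤ :=
  (if ∃ k : ℤ, b + y = (k : ℝ) then 1 else 0) - (if ∃ k : ℤ, a + y = (k : ℝ) then 1 else 0)

theorem intervalWeight_mem (a b y : ℝ) :
    intervalWeight a b y = -1 ∨ intervalWeight a b y = 0 ∨ intervalWeight a b y = 1 := by
  unfold intervalWeight
  split_ifs <;> simp

theorem sub_inv_mul_intCast_eq_zpow_sub_zpow_neg {K : Type*} [DivisionRing K] (v : K) {n : ℤ}
    (hn : n = -1 ∨ n = 0 ∨ n = 1) : (v - v⁻¹) * n = v ^ n - v ^ (-n) := by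
  rcases hn with rfl | rfl | rfl <;> simp

section Operators

variable {K : Type*} [Field K] (u : Kˣ) (a b : ℝ)

theorem Eop_single (y : ℝ) (c : K) :
    Eop u a b (Finsupp.single y c) =
      if ∃ k : ℤ, a + y = (k : ℝ) then ((u⁻¹ : Kˣ) : K) • Finsupp.single (y + a - b) c else 0 := by
  simp only [Eop, Finsupp.lsum_single]
  split_ifs <;> simp

theorem Fop_single (y : ℝ) (c : K) :
    Fop u a b (Finsupp.single y c) =
      if ∃ k : ℤ, b + y = (k : ℝ) then (u : K) • Finsupp.single (y + b - a) c else 0 := by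
  simp only [Fop, Finsupp.lsum_single]
  split_ifs <;> simp

theorem Eop_comp_Fop_single (y : ℝ) (c : K) :
    (Eop u a b ∘ₗ Fop u a b) (Finsupp.single y c) =
      if ∃ k : ℤ, b + y = (k : ℝ) then Finsupp.single y c else 0 := by
  split_ifs with h
  · have h' : ∃ k : ℤ, a + (y + b - a) = (k : ℝ) := by rwa [add_sub_cancel, add_comm]
    rw [LinearMap.comp_apply, Fop_single, if_pos h, map_smul, Eop_single, if_pos h', smul_smul,
      Units.mul_inv, one_smul, sub_add_cancel, add_sub_cancel_right]
  · rw [LinearMap.comp_apply, Fop_single, if_neg h, map_zero]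

theorem Fop_comp_Eop_single (y : ℝ) (c : K) :
    (Fop u a b ∘ₗ Eop u a b) (Finsupp.single y c) =
      if ∃ k : ℤ, a + y = (k : ℝ) then Finsupp.single y c else 0 := by
  split_ifs with h
  · have h' : ∃ k : ℤ, b + (y + a - b) = (k : ℝ) := by rwa [add_sub_cancel, add_comm]
    rw [LinearMap.comp_apply, Eop_single, if_pos h, map_smul, Fop_single, if_pos h', smul_smul,
      Units.inv_mul, one_smul, sub_add_cancel, add_sub_cancel_right]
  · rw [LinearMap.comp_apply, Eop_single, if_neg h, map_zero]

theorem commutator_EF_single (y : ℝ) (c : K) :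
    (Eop u a b ∘ₗ Fop u a b - Fop u a b ∘ₗ Eop u a b) (Finsupp.single y c) =
      (intervalWeight a b y : K) • Finsupp.single y c := by
  rw [LinearMap.sub_apply, Eop_comp_Fop_single, Fop_comp_Eop_single, intervalWeight]
  split_ifs <;> simp

theorem Kop_single (s : ℤ) (y : ℝ) (c : K) :
    Kop u a b s (Finsupp.single y c) =
      (((u : K) ^ 2) ^ (s * intervalWeight a b y)) • Finsupp.single y c := by
  simp [Kop, intervalWeight]

end Operators

theorem EF_commutator_eq_K_general {K : Type*} [Field K] (u : Kˣ) (a b : ℝ) :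
    ((u : K) ^ 2 - ((u : K) ^ 2)⁻¹) •
        (Eop u a b ∘ₗ Fop u a b - Fop u a b ∘ₗ Eop u a b) =
      Kop u a b 1 - Kop u a b (-1) := by
  refine Finsupp.lhom_ext fun y c => ?_
  rw [LinearMap.smul_apply, commutator_EF_single, smul_smul, LinearMap.sub_apply,
    Kop_single, Kop_single, ← sub_smul, one_mul, neg_one_mul,
    sub_inv_mul_intCast_eq_zpow_sub_zpow_neg _ (intervalWeight_mem a b y)]

/-- the Drinfeld–Jimbo relation
`(v − v⁻¹)·(E_{a,b}∘F_{a,b} − F_{a,b}∘E_{a,b}) = K_{a,b} − K_{a,b}⁻¹` (with `v = u²`) holds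
on the fundamental representation, for every strict interval (`a < b`, `b − a < 1`). -/
theorem EF_commutator_eq_K {K : Type*} [Field K] (u : Kˣ) (a b : ℝ)
    (hab : a < b) (hlen : b - a < 1) :
    ((u : K) ^ 2 - ((u : K) ^ 2)⁻¹) •
        (Eop u a b ∘ₗ Fop u a b - Fop u a b ∘ₗ Eop u a b) =
      Kop u a b 1 - Kop u a b (-1) :=
  EF_commutator_eq_K_general u a b
end

section
/- Let K be a field and u ∈ Kˣ a unit; set v = u² (u plays the role of υ^{1/2}). Let M be the free K-module with basis {u⃗_y}_{y ∈ ℝ}. For reals c < d with d − c ≤ 1 define K_{c,d}^{±1}(u⃗_y) = v^{±ε(y)}·u⃗_y with ε(y) = 𝟙[d+y ∈ ℤ] − 𝟙[c+y ∈ ℤ], and for reals a < b with b − a < 1 define E_{a,b}(u⃗_y) = u⁻¹·u⃗_{y+a−b} if a + y ∈ ℤ and 0 otherwise, F_{a,b}(u⃗_y) = u·u⃗_{y+b−a} if b + y ∈ ℤ and 0 otherwise. Then: (i) any two of the operators K_{c,d}^{±1} commute; (ii) if c < d < e ≤ c + 1 then K_{c,d} ∘ K_{d,e} = K_{c,e};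 (iii) for every interval (c < d ≤ c+1) and every strict interval (a < b < a+1), K_{c,d} ∘ E_{a,b} ∘ K_{c,d}^{−1} = v^{P}·E_{a,b} and K_{c,d} ∘ F_{a,b} ∘ K_{c,d}^{−1} = v^{−P}·F_{a,b}, where P = 𝟙[a ≡ c] + 𝟙[b ≡ d] − 𝟙[a ≡ d] − 𝟙[b ≡ c] ∈ ℤ and x ≡ y means x − y ∈ ℤ. -/
open scoped Classical

/-!
All these operators are monomial in the basis `u⃗_y`: each `K_{c,d}^{±1}` is diagonal, and
`E_{a,b}`, `F_{a,b}` are weighted shifts `u⃗_y ↦ α·u⃗_{σ y}` supported where `y` meets an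
endpoint mod `ℤ`. Diagonal operators compose by multiplying their weights, which gives
commutation and the join relation, and conjugating a weighted shift by diagonal operators
with weights `w`, `w'` rescales it by `w(σ y)·w'(y)`. On the support of `E_{a,b}` (resp.
`F_{a,b}`) the point `y` is congruent to `−a` (resp. `−b`) and `σ y` to `−b` (resp. `−a`), so
this factor is the constant `v^{±P}`.
-/

section MonomialOperators

variable {R ι : Type*} [CommSemiring R]

noncomputable def diagonalOp (w : ι → R) : (ι →₀ R) →ₗ[R] (ι →₀ R) :=
  Finsupp.lsum R fun y => w y • Finsupp.lsingle y

noncomputable def weightedShift (p : ι → Prop) (σ : ι → ι) (α : R) :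
    (ι →₀ R) →ₗ[R] (ι →₀ R) :=
  Finsupp.lsum R fun y => if p y then α • Finsupp.lsingle (σ y) else 0

lemma diagonalOp_single (w : ι → R) (y : ι) (x : R) :
    diagonalOp w (Finsupp.single y x) = w y • Finsupp.single y x := by
  simp [diagonalOp]

lemma weightedShift_single (p : ι → Prop) (σ : ι → ι) (α : R) (y : ι) (x : R) :
    weightedShift p σ α (Finsupp.single y x) =
      if p y then α • Finsupp.single (σ y) x else 0 := by
  by_cases hy : p y <;> simp [weightedShift, hy]

lemma diagonalOp_comp_diagonalOp (w w' : ι → R) :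
    diagonalOp w ∘ₗ diagonalOp w' = diagonalOp (w * w') :=
  Finsupp.lhom_ext fun y x => by
    simp only [LinearMap.comp_apply, diagonalOp_single, map_smul, smul_smul, Pi.mul_apply,
      mul_comm]

lemma diagonalOp_comp_weightedShift_comp_diagonalOp {p : ι → Prop} {σ : ι → ι} {α μ : R}
    {w w' : ι → R} (h : ∀ y, p y → w (σ y) * w' y = μ) :
    diagonalOp w ∘ₗ weightedShift p σ α ∘ₗ diagonalOp w' = μ • weightedShift p σ α := by
  refine Finsupp.lhom_ext fun y x => ?_
  by_cases hy : p y
  · simp only [LinearMap.comp_apply, LinearMap.smul_apply, diagonalOp_single, map_smul,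
      weightedShift_single, hy, if_true, smul_smul, ← h y hy]
    congr 1
    ring
  · simp only [LinearMap.comp_apply, LinearMap.smul_apply, diagonalOp_single, map_smul,
      weightedShift_single, hy, if_false, smul_zero, map_zero]

end MonomialOperators

noncomputable def intIndicator (x : ℝ) : ℤ :=
  if ∃ k : ℤ, x = (k : ℝ) then 1 else 0

lemma intIndicator_eq_of_add_eq_int {x x' : ℝ} (h : ∃ k : ℤ, x + x' = (k : ℝ)) :
    intIndicator x = intIndicator x' := by
  obtain ⟨k, hk⟩ := h
  have : (∃ m : ℤ, x = (m : ℝ)) ↔ ∃ m : ℤ, x' = (m : ℝ) :=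
    ⟨fun ⟨m, hm⟩ => ⟨k - m, by push_cast; linarith⟩,
      fun ⟨m, hm⟩ => ⟨k - m, by push_cast; linarith⟩⟩
  simp only [intIndicator, this]

/-- The exponent `ε(y)` of `K_{c,d}` on `u⃗_y`. -/
noncomputable def cartanExponent (c d y : ℝ) : ℤ :=
  intIndicator (d + y) - intIndicator (c + y)

lemma cartanExponent_of_add_eq_int {c d x y : ℝ} (h : ∃ k : ℤ, x + y = (k : ℝ)) :
    cartanExponent c d y = intIndicator (x - d) - intIndicator (x - c) := by
  obtain ⟨k, hk⟩ := h
  rw [cartanExponent, intIndicator_eq_of_add_eq_int (x := d + y) (x' := x - d) ⟨k, by linarith⟩,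
    intIndicator_eq_of_add_eq_int (x := c + y) (x' := x - c) ⟨k, by linarith⟩]

section Operators

variable {K : Type*} [Field K] (u : Kˣ)

lemma Kop_eq_diagonalOp (c d : ℝ) (s : ℤ) :
    Kop u c d s = diagonalOp fun y => (((u ^ 2) ^ (s * cartanExponent c d y) : Kˣ) : K) :=
  rfl

lemma Eop_eq_weightedShift (a b : ℝ) :
    Eop u a b =
      weightedShift (fun y => ∃ k : ℤ, a + y = (k : ℝ)) (fun y => y + a - b) ((u⁻¹ : Kˣ) : K) :=
  rfl

lemma Fop_eq_weightedShift (a b : ℝ) :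
    Fop u a b = weightedShift (fun y => ∃ k : ℤ, b + y = (k : ℝ)) (fun y => y + b - a) (u : K) :=
  rfl

lemma Kop_comp_Kop (c₁ d₁ c₂ d₂ : ℝ) (s t : ℤ) :
    Kop u c₁ d₁ s ∘ₗ Kop u c₂ d₂ t = diagonalOp fun y =>
      (((u ^ 2) ^ (s * cartanExponent c₁ d₁ y + t * cartanExponent c₂ d₂ y) : Kˣ) : K) := by
  simp only [Kop_eq_diagonalOp, diagonalOp_comp_diagonalOp, zpow_add, Units.val_mul]
  rfl

/-- `E_{a,b}` is the case `(x, x') = (a, b)`, and `F_{a,b}` the case `(x, x') = (b, a)`. -/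
lemma Kop_comp_weightedShift_comp_Kop_neg_one (c d x x' : ℝ) (α : K) :
    Kop u c d 1 ∘ₗ weightedShift (fun y => ∃ k : ℤ, x + y = (k : ℝ)) (fun y => y + x - x') α
        ∘ₗ Kop u c d (-1) =
      (((u ^ 2) ^ (intIndicator (x' - d) - intIndicator (x' - c) -
          (intIndicator (x - d) - intIndicator (x - c))) : Kˣ) : K) •
        weightedShift (fun y => ∃ k : ℤ, x + y = (k : ℝ)) (fun y => y + x - x') α := by
  rw [Kop_eq_diagonalOp, Kop_eq_diagonalOp]
  refine diagonalOp_comp_weightedShift_comp_diagonalOp fun y ⟨k, hk⟩ => ?_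
  have hσ : ∃ k : ℤ, x' + (y + x - x') = (k : ℝ) := ⟨k, by linarith⟩
  rw [cartanExponent_of_add_eq_int hσ, cartanExponent_of_add_eq_int ⟨k, hk⟩, ← Units.val_mul,
    ← zpow_add]
  congr 2
  ring

end Operators

/-- Cartan relations on the fundamental representation: (i) any two of the
operators `K_{c,d}^{±1}` commute; (ii) the join relation `K_{c,d}∘K_{d,e} = K_{c,e}` for
`c < d < e ≤ c + 1`; (iii) `K_{c,d}∘E_{a,b}∘K_{c,d}⁻¹ = v^P·E_{a,b}` and
`K_{c,d}∘F_{a,b}∘K_{c,d}⁻¹ = v^{−P}·F_{a,b}`, with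
`P = 𝟙[a≡c] + 𝟙[b≡d] − 𝟙[a≡d] − 𝟙[b≡c]` (congruence mod ℤ) and `v = u²`. -/
theorem K_relations {K : Type*} [Field K] (u : Kˣ) :
    -- (i)
    (∀ c₁ d₁ c₂ d₂ : ℝ, c₁ < d₁ → d₁ - c₁ ≤ 1 → c₂ < d₂ → d₂ - c₂ ≤ 1 →
      ∀ s t : ℤ, (s = 1 ∨ s = -1) → (t = 1 ∨ t = -1) →
        Kop u c₁ d₁ s ∘ₗ Kop u c₂ d₂ t = Kop u c₂ d₂ t ∘ₗ Kop u c₁ d₁ s) ∧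
    -- (ii)
    (∀ c d e : ℝ, c < d → d < e → e ≤ c + 1 →
      Kop u c d 1 ∘ₗ Kop u d e 1 = Kop u c e 1) ∧
    -- (iii)
    (∀ c d a b : ℝ, c < d → d - c ≤ 1 → a < b → b - a < 1 →
      Kop u c d 1 ∘ₗ Eop u a b ∘ₗ Kop u c d (-1) =
        ((((u ^ 2) ^ (((if ∃ k : ℤ, a - c = (k : ℝ) then 1 else 0) +
            (if ∃ k : ℤ, b - d = (k : ℝ) then 1 else 0) -
            (if ∃ k : ℤ, a - d = (k : ℝ) then 1 else 0) -
            (if ∃ k : ℤ, b - c = (k : ℝ) then 1 else 0) : ℤ))) : Kˣ) : K) • Eop u a b ∧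
      Kop u c d 1 ∘ₗ Fop u a b ∘ₗ Kop u c d (-1) =
        ((((u ^ 2) ^ (-((if ∃ k : ℤ, a - c = (k : ℝ) then 1 else 0) +
            (if ∃ k : ℤ, b - d = (k : ℝ) then 1 else 0) -
            (if ∃ k : ℤ, a - d = (k : ℝ) then 1 else 0) -
            (if ∃ k : ℤ, b - c = (k : ℝ) then 1 else 0) : ℤ))) : Kˣ) : K) • Fop u a b) := by
  refine ⟨fun c₁ d₁ c₂ d₂ _ _ _ _ s t _ _ => ?_, fun c d e _ _ _ => ?_,
    fun c d a b _ _ _ _ => ⟨?_, ?_⟩⟩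
  · rw [Kop_comp_Kop, Kop_comp_Kop]
    simp only [add_comm]
  · rw [Kop_comp_Kop, Kop_eq_diagonalOp]
    congr! 4 with y
    simp only [cartanExponent]
    ring
  · rw [Eop_eq_weightedShift, Kop_comp_weightedShift_comp_Kop_neg_one]
    congr 3
    simp only [intIndicator]
    ring
  · rw [Fop_eq_weightedShift, Kop_comp_weightedShift_comp_Kop_neg_one]
    congr 3
    simp only [intIndicator]
    ring
end
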